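/- arXiv:2102.09768 — 3 statements merged into one kernel-verified Lean document; each statement's English description precedes it below -/
import Mathlib

section
/- Let K be an n×n real symmetric matrix with all eigenvalues in [0,1]. Then all coefficients of the multiaffine polynomial det(I − K + KZ), Z = diag(z_1,...,z_n), are nonnegative and sum to 1; hence det(I−K+KZ) is a probability generating polynomial. -/
/-!
Expanding `det (I - K + K Z)` column by column, the coefficient of `∏_{i ∈ S} z_i` is the
determinant of the matrix whose `j`-th column is that of `K` for `j ∈ S` and that of `I - K`
otherwise; hence the polynomial is multiaffine, and at `z = 1` it is `det I = 1`.
Over `S ⊕ Sᶜ` that matrix is the block matrix `[[K₁₁, -K₂₁ᵀ], [K₂₁, (I - K)₂₂]]`, so when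
`I - K` is positive definite the Schur complement gives the determinant
`det (I - K)₂₂ * det (K₁₁ + K₂₁ᵀ (I - K)₂₂⁻¹ K₂₁) ≥ 0`. The general case follows by continuity,
replacing `K` by `t • K` and letting `t → 1⁻`.
-/

open MvPolynomial Matrix

namespace Matrix

variable {n R : Type*} [Fintype n] [DecidableEq n]

def mixedMatrix [Ring R] (A : Matrix n n R) (S : Finset n) : Matrix n n R :=
  of fun i j => if j ∈ S then A i j else (1 - A) i j

theorem det_one_sub_add_mul_diagonal_X_eq_sum [CommRing R] (A : Matrix n n R) :
    (1 - A.map C + A.map C * diagonal (fun i => (X i : MvPolynomial n R))).det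
      = ∑ S : Finset n, C (mixedMatrix A S).det * ∏ i ∈ S, X i := by
  set colA : n → n → MvPolynomial n R := fun i j => C (A j i)
  set colA' : n → n → MvPolynomial n R := fun i j => C ((1 - A) j i)
  have hrows : (1 - A.map C + A.map C * diagonal (fun i => (X i : MvPolynomial n R)))ᵀ
      = ((fun i => (X i : MvPolynomial n R) • colA i) + colA' : n → n → MvPolynomial n R) := by
    funext i j
    simp only [transpose_apply, add_apply, sub_apply, one_apply, map_apply, mul_diagonal, C_sub,
      apply_ite C, C_1, C_0, Pi.add_apply, Pi.smul_apply, smul_eq_mul, colA, colA']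
    ring
  rw [← det_transpose, hrows]
  change detRowAlternating _ = _
  rw [AlternatingMap.map_add_univ]
  refine Finset.sum_congr rfl fun S _ => ?_
  set M : n → n → MvPolynomial n R := ((mixedMatrix A S).map C)ᵀ
  have hpiece : S.piecewise (fun i => (X i : MvPolynomial n R) • colA i) colA'
      = fun i => (if i ∈ S then (X i : MvPolynomial n R) else 1) • M i := by
    funext i j
    by_cases hi : i ∈ S <;> simp [hi, colA, colA', M, mixedMatrix]
  rw [hpiece, AlternatingMap.map_smul_univ, Finset.prod_ite_mem, Finset.univ_inter, smul_eq_mul,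
    mul_comm]
  congr 1
  change det ((mixedMatrix A S).map C)ᵀ = _
  rw [det_transpose, RingHom.map_det]
  rfl

theorem PosSemidef.det_mixedMatrix_nonneg_of_posDef {A : Matrix n n ℝ} (hA : A.PosSemidef)
    (hA' : (1 - A).PosDef) (S : Finset n) : 0 ≤ (mixedMatrix A S).det := by
  set C : Matrix {i // i ∉ S} {i // i ∈ S} ℝ := A.submatrix (↑) (↑)
  set D : Matrix {i // i ∉ S} {i // i ∉ S} ℝ := (1 - A).submatrix (↑) (↑)
  have hD : D.PosDef := hA'.submatrix Subtype.val_injective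
  have hblocks : (mixedMatrix A S).submatrix (Equiv.sumCompl (· ∈ S)) (Equiv.sumCompl (· ∈ S))
      = fromBlocks (A.submatrix (↑) (↑)) (-Cᴴ) C D := by
    ext (i | i) (j | j)
    · simp [mixedMatrix]
    · have hij : (i : n) ≠ j := fun h => j.2 (h ▸ i.2)
      simp only [mixedMatrix, sub_apply, submatrix_apply, Equiv.sumCompl_apply_inl,
        Equiv.sumCompl_apply_inr, of_apply, j.2, ↓reduceIte, one_apply_ne hij, zero_sub,
        conjTranspose_eq_transpose_of_trivial, transpose_submatrix, fromBlocks_apply₁₂, neg_apply,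
        transpose_apply, neg_inj, C]
      rw [← hA.isHermitian.apply i j, star_trivial]
    · simp [mixedMatrix, C, j.2]
    · simp [mixedMatrix, D, j.2]
  have := hD.isUnit.invertible
  rw [← det_submatrix_equiv_self (Equiv.sumCompl (· ∈ S)), hblocks, det_fromBlocks₂₂,
    invOf_eq_nonsing_inv, Matrix.neg_mul, Matrix.neg_mul, sub_neg_eq_add]
  exact mul_nonneg hD.det_pos.le
    ((hA.submatrix _).add (hD.posSemidef.inv.conjTranspose_mul_mul_same C)).det_nonneg

theorem PosSemidef.det_mixedMatrix_nonneg {A : Matrix n n ℝ} (hA : A.PosSemidef)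
    (hA' : (1 - A).PosSemidef) (S : Finset n) : 0 ≤ (mixedMatrix A S).det := by
  have hcont : Continuous fun t : ℝ => (mixedMatrix (t • A) S).det := by
    refine Continuous.matrix_det (continuous_pi fun i => continuous_pi fun j => ?_)
    simp only [mixedMatrix, of_apply]
    split_ifs <;> fun_prop
  have hIoo : Set.Ioo (0 : ℝ) 1 ⊆ {t | 0 ≤ (mixedMatrix (t • A) S).det} := by
    intro t ⟨ht₀, ht₁⟩
    have hsplit : 1 - t • A = (1 - t) • (1 : Matrix n n ℝ) + t • (1 - A) := by
      rw [smul_sub, sub_smul, one_smul]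
      abel
    refine (hA.smul ht₀.le).det_mixedMatrix_nonneg_of_posDef ?_ S
    rw [hsplit]
    exact (PosDef.one.smul (sub_pos.2 ht₁)).add_posSemidef (hA'.smul ht₀.le)
  have hone : (1 : ℝ) ∈ closure (Set.Ioo 0 1) := by
    rw [closure_Ioo zero_ne_one]
    exact ⟨zero_le_one, le_rfl⟩
  simpa using (isClosed_le continuous_const hcont).closure_subset_iff.2 hIoo hone

theorem eval_one_det_one_sub_add_mul_diagonal_X [CommRing R] (A : Matrix n n R) :
    eval 1 (1 - A.map C + A.map C * diagonal (fun i => (X i : MvPolynomial n R))).det = 1 := by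
  rw [RingHom.map_det, ← det_one (n := n) (R := R)]
  congr 1
  ext i j
  simp [mul_diagonal, one_apply, apply_ite (eval 1)]

end Matrix

namespace MvPolynomial

variable {σ R : Type*}

theorem C_mul_prod_X_eq_monomial [CommSemiring R] (S : Finset σ) (a : R) :
    C a * ∏ i ∈ S, X i = monomial (∑ i ∈ S, Finsupp.single i 1) a :=
  (monomial_sum_index S _ a).symm

variable [Fintype σ] [DecidableEq σ]

theorem coeff_sum_C_mul_prod_X [CommSemiring R] (c : Finset σ → R) (m : σ →₀ ℕ) :
    coeff m (∑ S, C (c S) * ∏ i ∈ S, X i)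
      = ∑ S, if ∑ i ∈ S, Finsupp.single i 1 = m then c S else 0 := by
  simp_rw [coeff_sum, C_mul_prod_X_eq_monomial, coeff_monomial]

theorem le_one_of_mem_support_sum_C_mul_prod_X [CommSemiring R] {c : Finset σ → R}
    {m : σ →₀ ℕ} (hm : m ∈ (∑ S, C (c S) * ∏ i ∈ S, X i).support) (i : σ) : m i ≤ 1 := by
  rw [mem_support_iff, coeff_sum_C_mul_prod_X] at hm
  obtain ⟨S, -, hS⟩ := Finset.exists_ne_zero_of_sum_ne_zero hm
  rw [← (ite_ne_right_iff.1 hS).1, Finsupp.finsetSum_apply]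
  simp only [Finsupp.single_apply, Finset.sum_ite_eq']
  split_ifs <;> omega

theorem coeff_sum_C_mul_prod_X_nonneg [CommSemiring R] [PartialOrder R]
    [IsOrderedRing R] {c : Finset σ → R}
    (hc : ∀ S, 0 ≤ c S) (m : σ →₀ ℕ) : 0 ≤ coeff m (∑ S, C (c S) * ∏ i ∈ S, X i) := by
  rw [coeff_sum_C_mul_prod_X]
  exact Finset.sum_nonneg fun S _ => ite_nonneg (hc S) le_rfl

end MvPolynomial

/-- For a symmetric matrix `K` with all eigenvalues in `[0,1]` (equivalently, both `K`
and `I − K` are positive semidefinite), the multiaffine polynomial `det(I − K + KZ)`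
has nonnegative coefficients summing to 1; hence it is a probability generating
polynomial. -/
theorem dpp_marginal_kernel_is_pgp (n : ℕ) (K : Matrix (Fin n) (Fin n) ℝ)
    (hK : K.PosSemidef) (hK' : ((1 : Matrix (Fin n) (Fin n) ℝ) - K).PosSemidef) :
    let g : MvPolynomial (Fin n) ℝ :=
      ((1 : Matrix (Fin n) (Fin n) (MvPolynomial (Fin n) ℝ)) - K.map MvPolynomial.C
        + K.map MvPolynomial.C *
          Matrix.diagonal (fun i => (MvPolynomial.X i : MvPolynomial (Fin n) ℝ))).det
    (∀ m ∈ g.support, ∀ i, m i ≤ 1)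
    ∧ (∀ m, 0 ≤ g.coeff m)
    ∧ MvPolynomial.eval (fun _ => (1 : ℝ)) g = 1 := by
  intro g
  have hg : g = ∑ S, C (mixedMatrix K S).det * ∏ i ∈ S, X i :=
    det_one_sub_add_mul_diagonal_X_eq_sum K
  refine ⟨fun m hm => ?_, fun m => ?_, eval_one_det_one_sub_add_mul_diagonal_X K⟩
  · rw [hg] at hm
    exact le_one_of_mem_support_sum_C_mul_prod_X hm
  · rw [hg]
    exact coeff_sum_C_mul_prod_X_nonneg (fun S => hK.det_mixedMatrix_nonneg hK' S) m
end

section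
/- Let G = (V,E) be a connected graph on vertex set {1,...,n}, with edge variables z_e and nonnegative weights w_e, and weighted Laplacian L(G) = Σ_{e∈E} w_e z_e A_e, where for e = {i,j}, A_e has (A_e)_{ii} = (A_e)_{jj} = 1, (A_e)_{ij} = (A_e)_{ji} = −1, and zeros elsewhere. Then for any vertex i, det(L(G)_{\{i}}) = Σ_{T spanning tree of G} (∏_{e ∈ edges(T)} w_e z_e), where L(G)_{\{i}} is the principal minor obtained by deleting row and column i. -/
open MvPolynomial Matrix
open scoped Classical

namespace MTTaux

noncomputable def inc {V E : Type*} [DecidableEq V] (u v : E → V) (x : V) (e : E) : ℝ :=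
  if x = u e then 1 else if x = v e then -1 else 0

def graphOf {V E : Type*} (u v : E → V) : SimpleGraph V :=
  SimpleGraph.fromEdgeSet {x : Sym2 V | ∃ e : E, x = s(u e, v e)}

lemma sum_subtype_inc {V E : Type*} [Fintype V] [DecidableEq V] (u v : E → V) (r : V) (e : E)
    (hl : u e ≠ v e) (y : V → ℝ) (hyr : y r = 0) :
    ∑ a : {j : V // j ≠ r}, y ↑a * inc u v ↑a e = y (u e) - y (v e) := by
  have h1 : ∑ a : {j : V // j ≠ r}, y ↑a * inc u v ↑a e
      = ∑ x ∈ Finset.univ.erase r, y x * inc u v x e :=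
    (Finset.sum_subtype (p := fun x => x ≠ r) (Finset.univ.erase r) (fun x => by simp)
      (fun x => y x * inc u v x e)).symm
  have h2 : ∑ x ∈ Finset.univ.erase r, y x * inc u v x e
      = ∑ x : V, y x * inc u v x e :=
    Finset.sum_erase _ (by simp [hyr])
  have h3 : ∀ x : V, y x * inc u v x e
      = (if x = u e then y x else 0) - (if x = v e then y x else 0) := by
    intro x
    by_cases hxu : x = u e
    · have hxv : x ≠ v e := fun h => hl (hxu.symm.trans h)
      simp [inc, hxu, hxv, hl]
    · by_cases hxv : x = v e
      · simp [inc, hxu, hxv, Ne.symm hl]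
      · simp [inc, hxu, hxv, Ne.symm hl]
  rw [h1, h2]
  simp only [h3]
  rw [Finset.sum_sub_distrib, Finset.sum_ite_eq' Finset.univ (u e) y,
    Finset.sum_ite_eq' Finset.univ (v e) y]
  simp

lemma adj_graphOf {V E : Type*} (u v : E → V) (hl : ∀ e, u e ≠ v e) (e : E) :
    (graphOf u v).Adj (u e) (v e) := by
  rw [graphOf, SimpleGraph.fromEdgeSet_adj]
  exact ⟨⟨e, rfl⟩, hl e⟩

lemma det_eq_zero_of_not_connected {V E : Type*} [Fintype V] [DecidableEq V] [Fintype E]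
    (u v : E → V) (hl : ∀ e, u e ≠ v e) (r : V)
    (g : {j : V // j ≠ r} ≃ E)
    (hnc : ¬ (graphOf u v).Connected) :
    (Matrix.of fun a b : {j : V // j ≠ r} => inc u v ↑a (g b)).det = 0 := by
  rw [← Matrix.exists_vecMul_eq_zero_iff]
  obtain ⟨x, hx⟩ : ∃ x : V, ¬ (graphOf u v).Reachable r x := by
    by_contra h
    push_neg at h
    haveI : Nonempty V := ⟨r⟩
    exact hnc ⟨fun a b => ((h a).symm.trans (h b))⟩
  set y : V → ℝ := fun z => if (graphOf u v).Reachable r z then 0 else 1 with hy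
  have hyr : y r = 0 := by simp [hy, SimpleGraph.Reachable.refl]
  have hxr : x ≠ r := by rintro rfl; exact hx (SimpleGraph.Reachable.refl _)
  refine ⟨fun a => y ↑a, ?_, ?_⟩
  · intro h0
    have := congrFun h0 ⟨x, hxr⟩
    simp [hy, hx] at this
  · funext b
    have hsum : ∑ a : {j : V // j ≠ r}, y ↑a * inc u v ↑a (g b)
        = y (u (g b)) - y (v (g b)) := sum_subtype_inc u v r (g b) (hl _) y hyr
    have hre : (graphOf u v).Reachable r (u (g b)) ↔ (graphOf u v).Reachable r (v (g b)) :=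
      ⟨fun h => h.trans (adj_graphOf u v hl (g b)).reachable,
       fun h => h.trans (adj_graphOf u v hl (g b)).symm.reachable⟩
    have : y (u (g b)) = y (v (g b)) := by
      simp only [hy]
      by_cases h : (graphOf u v).Reachable r (u (g b))
      · rw [if_pos h, if_pos (hre.mp h)]
      · rw [if_neg h, if_neg (fun h' => h (hre.mpr h'))]
    simp only [Matrix.vecMul, dotProduct, Matrix.of_apply, Pi.zero_apply]
    rw [hsum, this, sub_self]

lemma det_ne_zero_of_connected {V E : Type*} [Fintype V] [DecidableEq V] [Fintype E]
    (u v : E → V) (hl : ∀ e, u e ≠ v e) (r : V)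
    (g : {j : V // j ≠ r} ≃ E)
    (hc : (graphOf u v).Connected) :
    (Matrix.of fun a b : {j : V // j ≠ r} => inc u v ↑a (g b)).det ≠ 0 := by
  intro hdet
  obtain ⟨yy, hyy0, hyyM⟩ := Matrix.exists_vecMul_eq_zero_iff.mpr hdet
  set y : V → ℝ := fun z => if h : z = r then 0 else yy ⟨z, h⟩ with hy
  have hyr : y r = 0 := by simp [hy]
  have hcoe : ∀ a : {j : V // j ≠ r}, y ↑a = yy a := by
    intro a
    simp only [hy, dif_neg a.2]
  have hedge : ∀ e : E, y (u e) = y (v e) := by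
    intro e
    have h0 := congrFun hyyM (g.symm e)
    simp only [Matrix.vecMul, dotProduct, Matrix.of_apply, Pi.zero_apply,
      Equiv.apply_symm_apply] at h0
    have := sum_subtype_inc u v r e (hl e) y hyr
    simp only [hcoe] at this
    rw [h0] at this
    linarith [this]
  have hadj : ∀ {a b : V}, (graphOf u v).Adj a b → y a = y b := by
    intro a b hab
    rw [graphOf, SimpleGraph.fromEdgeSet_adj] at hab
    obtain ⟨⟨e, he⟩, hne⟩ := hab
    rw [Sym2.eq_iff] at he
    rcases he with ⟨h1, h2⟩ | ⟨h1, h2⟩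
    · rw [h1, h2]; exact hedge e
    · rw [h1, h2]; exact (hedge e).symm
  have key : ∀ (a b : V), (graphOf u v).Walk a b → y a = y b := by
    intro a b p
    induction p with
    | nil => rfl
    | cons h q ih => exact (hadj h).trans ih
  apply hyy0
  funext a
  have : y ↑a = 0 := by
    rw [← hyr]
    exact key _ _ ((hc.preconnected r ↑a).some).reverse
  rw [← hcoe a, this]
  rfl


lemma card_ne {V : Type*} [Fintype V] [DecidableEq V] (r : V) :
    Fintype.card {j : V // j ≠ r} = Fintype.card V - 1 := by
  have := Fintype.card_subtype_compl (fun j : V => j = r)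
  simpa [Fintype.card_subtype_eq] using this

universe x y

lemma detsq_eq_one : ∀ (m : ℕ) {V : Type x} [Fintype V] [DecidableEq V] {E : Type y} [Fintype E]
    (u v : E → V) (hl : ∀ e, u e ≠ v e) (r : V) (g : {j : V // j ≠ r} ≃ E),
    Fintype.card V = m + 1 → (graphOf u v).Connected →
    ((Matrix.of fun a b : {j : V // j ≠ r} => inc u v ↑a (g b)).det) ^ 2 = 1 := by
  intro m
  induction m with
  | zero =>
    intro V _ _ E _ u v hl r g hcard hconn
    haveI : IsEmpty {j : V // j ≠ r} := by
      rw [← Fintype.card_eq_zero_iff, card_ne, hcard]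
    rw [Matrix.det_isEmpty]
    norm_num
  | succ m ih =>
    intro V _ _ E _ u v hl r g hcard hconn
    haveI : Nonempty V := ⟨r⟩
    set G := graphOf u v with hG
    -- cardinalities
    have hrows : Fintype.card {j : V // j ≠ r} = m + 1 := by rw [card_ne, hcard]; omega
    have hcardE : Fintype.card E = m + 1 := by rw [← Fintype.card_congr g, hrows]
    -- degrees
    set deg : V → ℕ := fun x => (Finset.univ.filter fun e : E => u e = x ∨ v e = x).card
      with hdeg
    have hdegsum : ∑ x : V, deg x = 2 * (m + 1) := by
      simp only [hdeg, Finset.card_filter]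
      rw [Finset.sum_comm]
      have : ∀ e : E, (∑ x : V, if u e = x ∨ v e = x then 1 else 0) = 2 := by
        intro e
        rw [← Finset.card_filter]
        have : (Finset.univ.filter fun x : V => u e = x ∨ v e = x) = {u e, v e} := by
          ext x
          simp [eq_comm]
        rw [this, Finset.card_pair (hl e)]
      simp only [this, Finset.sum_const, Finset.card_univ, hcardE, smul_eq_mul]
      ring
    have hdegpos : ∀ x : V, 1 ≤ deg x := by
      intro x
      obtain ⟨z, hz⟩ := Fintype.exists_ne_of_one_lt_card (by omega) x
      obtain ⟨p⟩ := hconn.preconnected x z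
      cases p with
      | nil => exact absurd rfl hz
      | @cons _ c _ h q =>
        rw [hG, graphOf, SimpleGraph.fromEdgeSet_adj] at h
        obtain ⟨⟨e, he⟩, -⟩ := h
        rw [Sym2.eq_iff] at he
        have hmem : e ∈ Finset.univ.filter fun e : E => u e = x ∨ v e = x := by
          rcases he with ⟨h1, -⟩ | ⟨h1, -⟩
          · exact Finset.mem_filter.mpr ⟨Finset.mem_univ _, Or.inl h1.symm⟩
          · exact Finset.mem_filter.mpr ⟨Finset.mem_univ _, Or.inr h1.symm⟩
        exact Finset.card_pos.mpr ⟨e, hmem⟩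
    have hleaf : ∃ ℓ₀ : V, ℓ₀ ≠ r ∧ deg ℓ₀ = 1 := by
      by_contra hcon
      push_neg at hcon
      have h2 : ∀ x ∈ Finset.univ.erase r, 2 ≤ deg x := by
        intro x hx
        have hxr := Finset.ne_of_mem_erase hx
        have := hcon x hxr
        have := hdegpos x
        omega
      have hlow : (Finset.univ.erase r).card • 2 ≤ ∑ x ∈ Finset.univ.erase r, deg x :=
        Finset.card_nsmul_le_sum _ _ _ h2
      have hcer : (Finset.univ.erase r).card = m + 1 := by
        rw [Finset.card_erase_of_mem (Finset.mem_univ r), Finset.card_univ, hcard]; omega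
      have hsplit : deg r + ∑ x ∈ Finset.univ.erase r, deg x = ∑ x : V, deg x :=
        Finset.add_sum_erase _ _ (Finset.mem_univ r)
      have := hdegpos r
      rw [hcer] at hlow
      simp only [smul_eq_mul] at hlow
      omega
    obtain ⟨ℓ₀, hlr, hdegl⟩ := hleaf
    obtain ⟨e₀, hfe⟩ := Finset.card_eq_one.mp hdegl
    have he₀ : u e₀ = ℓ₀ ∨ v e₀ = ℓ₀ := by
      have : e₀ ∈ Finset.univ.filter fun e : E => u e = ℓ₀ ∨ v e = ℓ₀ := by
        rw [hfe]; exact Finset.mem_singleton_self _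
      exact (Finset.mem_filter.mp this).2
    have hother : ∀ e : E, e ≠ e₀ → u e ≠ ℓ₀ ∧ v e ≠ ℓ₀ := by
      intro e he
      have : e ∉ Finset.univ.filter fun e : E => u e = ℓ₀ ∨ v e = ℓ₀ := by
        rw [hfe]; simpa using he
      simp only [Finset.mem_filter, Finset.mem_univ, true_and] at this
      tauto
    -- set up reindexing equivs
    set ℓ : {j : V // j ≠ r} := ⟨ℓ₀, hlr⟩ with hℓ
    set b₀ : {j : V // j ≠ r} := g.symm e₀ with hb₀
    obtain ⟨eR0⟩ : Nonempty ({j : V // j ≠ r} ≃ Fin (m + 1)) :=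
      ⟨Fintype.equivFinOfCardEq hrows⟩
    obtain ⟨eC0⟩ : Nonempty ({j : V // j ≠ r} ≃ Fin (m + 1)) :=
      ⟨Fintype.equivFinOfCardEq hrows⟩
    set eR : {j : V // j ≠ r} ≃ Fin (m + 1) := eR0.trans (Equiv.swap 0 (eR0 ℓ)) with heR
    set eC : {j : V // j ≠ r} ≃ Fin (m + 1) := eC0.trans (Equiv.swap 0 (eC0 b₀)) with heC
    have heRℓ : eR ℓ = 0 := by simp [heR, Equiv.swap_apply_right]
    have heCb : eC b₀ = 0 := by simp [heC, Equiv.swap_apply_right]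
    set M : Matrix {j : V // j ≠ r} {j : V // j ≠ r} ℝ :=
      Matrix.of fun a b : {j : V // j ≠ r} => inc u v ↑a (g b) with hM
    set A : Matrix (Fin (m + 1)) (Fin (m + 1)) ℝ := M.submatrix eR.symm eC.symm with hA
    have hsq : A.det ^ 2 = M.det ^ 2 := by
      have hAeq : A = (M.submatrix eR.symm eR.symm).submatrix id (eC.symm.trans eR) := by
        ext p q
        simp [hA, Matrix.submatrix_apply]
      rw [hAeq, Matrix.det_permute' (eC.symm.trans eR), Matrix.det_submatrix_equiv_self]
      rcases Int.units_eq_one_or (Equiv.Perm.sign (eC.symm.trans eR)) with h | h <;>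
        rw [h] <;> push_cast <;> ring
    have hA0 : ∀ j : Fin (m + 1), j ≠ 0 → A 0 j = 0 := by
      intro j hj
      have h1 : eR.symm 0 = ℓ := by rw [← heRℓ, Equiv.symm_apply_apply]
      have h2 : g (eC.symm j) ≠ e₀ := by
        intro h
        apply hj
        rw [← heCb, hb₀]
        rw [← Equiv.apply_symm_apply eC j]
        congr 1
        rw [← Equiv.symm_apply_apply g (eC.symm j), h]
      obtain ⟨hu1, hv1⟩ := hother _ h2
      simp only [hA, Matrix.submatrix_apply, hM, Matrix.of_apply, h1]
      simp only [hℓ, inc]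
      rw [if_neg (fun h => hu1 h.symm), if_neg (fun h => hv1 h.symm)]
    have hdetA : A.det = A 0 0 * (A.submatrix Fin.succ Fin.succ).det := by
      rw [Matrix.det_succ_row_zero]
      rw [Finset.sum_eq_single 0]
      · have : (0 : Fin (m + 1)).succAbove = Fin.succ := funext fun p => Fin.zero_succAbove p
        rw [this]
        simp
      · intro j _ hj
        rw [hA0 j hj]
        ring
      · intro h
        exact absurd (Finset.mem_univ _) h
    have hA00 : A 0 0 ^ 2 = 1 := by
      have h1 : eR.symm 0 = ℓ := by rw [← heRℓ, Equiv.symm_apply_apply]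
      have h2 : eC.symm 0 = b₀ := by rw [← heCb, Equiv.symm_apply_apply]
      have : A 0 0 = inc u v ℓ₀ e₀ := by
        simp [hA, Matrix.submatrix_apply, hM, h1, h2, hb₀, hℓ]
      rw [this]
      by_cases hu1 : ℓ₀ = u e₀
      · simp [inc, hu1]
      · have hv1 : ℓ₀ = v e₀ := by
          rcases he₀ with h | h
          · exact absurd h.symm hu1
          · exact h.symm
        simp [inc, hu1, hv1]
    -- the smaller instance
    set V' := {x : V // x ≠ ℓ₀} with hV'
    set E' := {e : E // e ≠ e₀} with hE'
    set u' : E' → V' := fun e => ⟨u ↑e, (hother _ e.2).1⟩ with hu'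
    set v' : E' → V' := fun e => ⟨v ↑e, (hother _ e.2).2⟩ with hv'
    have hl' : ∀ e : E', u' e ≠ v' e := fun e h => hl _ (congrArg Subtype.val h)
    set r' : V' := ⟨r, Ne.symm hlr⟩ with hr'
    have hne_ℓ : ∀ p : Fin m, (eR.symm p.succ : V) ≠ ℓ₀ := by
      intro p h
      have h1 : eR.symm p.succ = ℓ := Subtype.ext h
      have h2 : p.succ = eR ℓ := by rw [← h1, Equiv.apply_symm_apply]
      rw [heRℓ] at h2
      exact Fin.succ_ne_zero p h2
    have hφinj : Function.Injective
        (fun p : Fin m => (⟨⟨(eR.symm p.succ : V), hne_ℓ p⟩,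
          fun h => (eR.symm p.succ).2 (congrArg Subtype.val h)⟩ : {j : V' // j ≠ r'})) := by
      intro p q hpq
      have : (eR.symm p.succ : V) = (eR.symm q.succ : V) := by
        exact congrArg (fun z => ((z : V') : V)) (congrArg Subtype.val hpq)
      have := Subtype.ext this
      have := eR.symm.injective this
      exact Fin.succ_injective _ this
    have hcV' : Fintype.card V' = m + 1 := by
      show Fintype.card {x : V // x ≠ ℓ₀} = m + 1
      rw [card_ne, hcard]; omega
    have hcrows' : Fintype.card {j : V' // j ≠ r'} = m := by
      rw [card_ne, hcV']; omega
    have hcE' : Fintype.card E' = m := by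
      show Fintype.card {e : E // e ≠ e₀} = m
      rw [card_ne, hcardE]; omega
    set φ : Fin m ≃ {j : V' // j ≠ r'} :=
      Equiv.ofBijective _ ((Fintype.bijective_iff_injective_and_card _).mpr
        ⟨hφinj, by simp [hcrows']⟩) with hφ
    have hφval : ∀ p : Fin m, ((φ p : V') : V) = (eR.symm p.succ : V) := fun p => rfl
    have hne_e₀ : ∀ q : Fin m, g (eC.symm q.succ) ≠ e₀ := by
      intro q h
      have h1 : eC.symm q.succ = b₀ := by
        rw [hb₀, ← h, Equiv.symm_apply_apply]
      have h2 : q.succ = eC b₀ := by rw [← h1, Equiv.apply_symm_apply]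
      rw [heCb] at h2
      exact Fin.succ_ne_zero q h2
    have hψinj : Function.Injective
        (fun q : Fin m => (⟨g (eC.symm q.succ), hne_e₀ q⟩ : E')) := by
      intro p q hpq
      have : g (eC.symm p.succ) = g (eC.symm q.succ) := congrArg Subtype.val hpq
      have := eC.symm.injective (g.injective this)
      exact Fin.succ_injective _ this
    set ψ : Fin m ≃ E' :=
      Equiv.ofBijective _ ((Fintype.bijective_iff_injective_and_card _).mpr
        ⟨hψinj, by simp [hcE']⟩) with hψ
    have hψval : ∀ q : Fin m, ((ψ q : E')  : E) = g (eC.symm q.succ) := fun q => rfl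
    set g' : {j : V' // j ≠ r'} ≃ E' := φ.symm.trans ψ with hg'
    set M' : Matrix {j : V' // j ≠ r'} {j : V' // j ≠ r'} ℝ :=
      Matrix.of fun a b : {j : V' // j ≠ r'} => inc u' v' ↑a (g' b) with hM'
    have hB : A.submatrix Fin.succ Fin.succ = M'.submatrix φ φ := by
      ext p q
      have h1 : g' (φ q) = ψ q := by rw [hg', Equiv.trans_apply, Equiv.symm_apply_apply]
      simp only [Matrix.submatrix_apply, hA, hM', Matrix.of_apply, hM, h1]
      show inc u v (↑(eR.symm p.succ)) (g (eC.symm q.succ)) = inc u' v' ↑(φ p) (ψ q)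
      have hinc' : ∀ (x : V') (e : E'), inc u' v' x e = inc u v ↑x ↑e := by
        intro x e
        simp only [inc]
        by_cases h1 : (x : V) = u ↑e
        · rw [if_pos (Subtype.ext h1), if_pos h1]
        · rw [if_neg (fun h => h1 (congrArg Subtype.val h)), if_neg h1]
          by_cases h2 : (x : V) = v ↑e
          · rw [if_pos (Subtype.ext h2), if_pos h2]
          · rw [if_neg (fun h => h2 (congrArg Subtype.val h)), if_neg h2]
      rw [hinc']
      rfl
    have hM'ne : M'.det ≠ 0 := by
      have hMne : M.det ≠ 0 := det_ne_zero_of_connected u v hl r g hconn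
      have hchain : M.det ^ 2 = A 0 0 ^ 2 * M'.det ^ 2 := by
        rw [← hsq, hdetA, hB, Matrix.det_submatrix_equiv_self, mul_pow]
      intro h
      rw [h] at hchain
      simp only [ne_eq, OfNat.ofNat_ne_zero, not_false_eq_true, zero_pow, mul_zero] at hchain
      exact pow_ne_zero _ hMne hchain
    have hconn' : (graphOf u' v').Connected := by
      by_contra hcon'
      exact hM'ne (det_eq_zero_of_not_connected u' v' hl' r' g' hcon')
    have := ih u' v' hl' r' g' hcV' hconn'
    rw [← hM'] at this
    have hchain : M.det ^ 2 = A 0 0 ^ 2 * M'.det ^ 2 := by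
      rw [← hsq, hdetA, hB, Matrix.det_submatrix_equiv_self, mul_pow]
    rw [hchain, this, hA00, one_mul]


lemma entry_eq {n : ℕ} {ε : Type*} (u v : ε → Fin n) (hl : ∀ e, u e ≠ v e) (e : ε) (a b : Fin n) :
    (if (a = u e ∧ b = u e) ∨ (a = v e ∧ b = v e) then (1 : MvPolynomial ε ℝ)
      else if (a = u e ∧ b = v e) ∨ (a = v e ∧ b = u e) then -1 else 0)
    = MvPolynomial.C (inc u v a e) * MvPolynomial.C (inc u v b e) := by
  have := hl e
  unfold inc
  by_cases h1 : a = u e <;> by_cases h2 : a = v e <;> by_cases h3 : b = u e <;>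
    by_cases h4 : b = v e <;> simp_all

end MTTaux

/-- Weighted Matrix-Tree theorem. A connected multigraph on vertices `Fin n` is given by
a finite edge index type `ε` with endpoint maps `u, v` (no self-loops) and nonnegative
edge weights `w`. The weighted Laplacian is `L(G) = Σ_e w_e z_e A_e`. A subset `T` of
edges is a spanning tree iff it has `n − 1` edges and its edges connect the graph.
Then for any vertex `i`, the principal minor of `L(G)` deleting row and column `i`
satisfies `det(L(G)_{∖{i}}) = Σ_{T spanning tree} ∏_{e ∈ T} w_e z_e`. -/
theorem weighted_matrix_tree (n : ℕ) (ε : Type*) [Fintype ε]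
    (u v : ε → Fin n) (hloop : ∀ e, u e ≠ v e)
    (w : ε → ℝ) (hw : ∀ e, 0 ≤ w e)
    (hconn : (SimpleGraph.fromEdgeSet
      {x : Sym2 (Fin n) | ∃ e : ε, x = s(u e, v e)}).Connected)
    (i : Fin n) :
    let L : Matrix (Fin n) (Fin n) (MvPolynomial ε ℝ) :=
      ∑ e : ε, (MvPolynomial.C (w e) * MvPolynomial.X e) •
        Matrix.of (fun a b : Fin n =>
          if (a = u e ∧ b = u e) ∨ (a = v e ∧ b = v e) then (1 : MvPolynomial ε ℝ)
          else if (a = u e ∧ b = v e) ∨ (a = v e ∧ b = u e) then -1 else 0)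
    (L.submatrix (fun a : {j : Fin n // j ≠ i} => (a : Fin n))
        (fun b : {j : Fin n // j ≠ i} => (b : Fin n))).det
      = ∑ T ∈ Finset.univ.filter (fun T : Finset ε =>
            T.card = n - 1 ∧
            (SimpleGraph.fromEdgeSet
              {x : Sym2 (Fin n) | ∃ e ∈ T, x = s(u e, v e)}).Connected),
          ∏ e ∈ T, MvPolynomial.C (w e) * MvPolynomial.X e := by
  intro L
  classical
  have hn : 0 < n := i.pos
  have hcardrows : Fintype.card {j : Fin n // j ≠ i} = n - 1 := by
    rw [MTTaux.card_ne, Fintype.card_fin]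
  set cc : ε → MvPolynomial ε ℝ := fun e => MvPolynomial.C (w e) * MvPolynomial.X e with hcc
  set NR : Fin n → ε → MvPolynomial ε ℝ := fun x e => MvPolynomial.C (MTTaux.inc u v x e)
    with hNR
  -- Step 0: entries of the reduced Laplacian
  have hL : ∀ a b : {j : Fin n // j ≠ i},
      L.submatrix (fun a : {j : Fin n // j ≠ i} => (a : Fin n))
        (fun b : {j : Fin n // j ≠ i} => (b : Fin n)) a b
      = ∑ e : ε, (cc e * NR ↑a e) * NR ↑b e := by
    intro a b
    simp only [L, Matrix.submatrix_apply, Matrix.sum_apply, Matrix.smul_apply,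
      Matrix.of_apply, smul_eq_mul]
    refine Finset.sum_congr rfl fun e _ => ?_
    rw [MTTaux.entry_eq u v hloop e ↑a ↑b, hNR]
    ring
  -- Step 1: multilinear expansion of the determinant
  have hdet : (L.submatrix (fun a : {j : Fin n // j ≠ i} => (a : Fin n))
        (fun b : {j : Fin n // j ≠ i} => (b : Fin n))).det
      = ∑ f : {j : Fin n // j ≠ i} → ε,
          (∏ a : {j : Fin n // j ≠ i}, (cc (f a) * NR ↑a (f a))) •
            (Matrix.of fun a b : {j : Fin n // j ≠ i} => NR ↑b (f a)).det := by
    have h0 : L.submatrix (fun a : {j : Fin n // j ≠ i} => (a : Fin n))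
        (fun b : {j : Fin n // j ≠ i} => (b : Fin n))
        = Matrix.of fun a : {j : Fin n // j ≠ i} =>
            ∑ e : ε, (cc e * NR ↑a e) • (fun b : {j : Fin n // j ≠ i} => NR ↑b e) := by
      ext a b
      rw [hL a b, Matrix.of_apply]
      simp only [Finset.sum_apply, Pi.smul_apply, smul_eq_mul]
    rw [h0]
    rw [show (Matrix.of fun a : {j : Fin n // j ≠ i} =>
          ∑ e : ε, (cc e * NR ↑a e) • (fun b : {j : Fin n // j ≠ i} => NR ↑b e)).det
        = (Matrix.detRowAlternating :
            (({j : Fin n // j ≠ i} → MvPolynomial ε ℝ)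
              [⋀^{j : Fin n // j ≠ i}]→ₗ[MvPolynomial ε ℝ] MvPolynomial ε ℝ)).toMultilinearMap
            (fun a : {j : Fin n // j ≠ i} =>
              ∑ e : ε, (cc e * NR ↑a e) • (fun b : {j : Fin n // j ≠ i} => NR ↑b e)) from rfl]
    rw [MultilinearMap.map_sum]
    refine Finset.sum_congr rfl fun f _ => ?_
    rw [MultilinearMap.map_smul_univ]
    rfl
  rw [hdet]
  set term : ({j : Fin n // j ≠ i} → ε) → MvPolynomial ε ℝ := fun f =>
    (∏ a : {j : Fin n // j ≠ i}, (cc (f a) * NR ↑a (f a))) •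
      (Matrix.of fun a b : {j : Fin n // j ≠ i} => NR ↑b (f a)).det with hterm
  -- Step 2: only injective maps contribute
  rw [← Finset.sum_filter_of_ne (p := fun f : {j : Fin n // j ≠ i} → ε => Function.Injective f)
    (fun f _ hne => by
      by_contra hinj
      obtain ⟨a, b, hab, hne'⟩ := Function.not_injective_iff.mp hinj
      apply hne
      have : (Matrix.of fun a b : {j : Fin n // j ≠ i} => NR ↑b (f a)).det = 0 := by
        refine Matrix.det_zero_of_row_eq hne' (funext fun x => ?_)
        simp only [Matrix.of_apply, hab]
      simp only [this, smul_zero])]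
  -- Step 3: group by the image of f
  rw [← Finset.sum_fiberwise_of_maps_to
    (g := fun f : {j : Fin n // j ≠ i} → ε => Finset.univ.image f)
    (t := Finset.powersetCard (n-1) (Finset.univ : Finset ε))
    (fun f hf => by
      rw [Finset.mem_powersetCard]
      refine ⟨Finset.subset_univ _, ?_⟩
      rw [Finset.card_image_of_injective _ (Finset.mem_filter.mp hf).2, Finset.card_univ,
        hcardrows]) term]
  -- Step 4: evaluate each fiber
  have hinner : ∀ S ∈ Finset.powersetCard (n-1) (Finset.univ : Finset ε),
      (∑ f ∈ (Finset.univ.filter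
          fun f : {j : Fin n // j ≠ i} → ε => Function.Injective f).filter
          (fun f => Finset.univ.image f = S), term f)
      = if (SimpleGraph.fromEdgeSet
            {x : Sym2 (Fin n) | ∃ e ∈ S, x = s(u e, v e)}).Connected
        then ∏ e ∈ S, cc e else 0 := by
    intro S hS
    have hcS : S.card = n - 1 := (Finset.mem_powersetCard.mp hS).2
    obtain ⟨gS⟩ : Nonempty ({j : Fin n // j ≠ i} ≃ ↥S) := by
      refine ⟨Fintype.equivOfCardEq ?_⟩
      rw [hcardrows, Fintype.card_coe, hcS]
    set uS : ↥S → Fin n := fun e => u ↑e with huS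
    set vS : ↥S → Fin n := fun e => v ↑e with hvS
    have hlS : ∀ e : ↥S, uS e ≠ vS e := fun e => hloop ↑e
    set MS : Matrix {j : Fin n // j ≠ i} {j : Fin n // j ≠ i} ℝ :=
      Matrix.of fun a b => MTTaux.inc uS vS ↑a (gS b) with hMS
    set P : Matrix {j : Fin n // j ≠ i} {j : Fin n // j ≠ i} (MvPolynomial ε ℝ) :=
      Matrix.of fun a b => NR ↑b ↑(gS a) with hP
    -- re-parametrize the fiber by permutations
    have hbij : (∑ f ∈ (Finset.univ.filter
          fun f : {j : Fin n // j ≠ i} → ε => Function.Injective f).filter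
          (fun f => Finset.univ.image f = S), term f)
        = ∑ σ : Equiv.Perm {j : Fin n // j ≠ i}, term (fun a => ↑(gS (σ a))) := by
      refine (Finset.sum_bij (fun σ _ => fun a => (↑(gS (σ a)) : ε)) ?_ ?_ ?_ ?_).symm
      · intro σ _
        rw [Finset.mem_filter, Finset.mem_filter]
        refine ⟨⟨Finset.mem_univ _, ?_⟩, ?_⟩
        · exact Subtype.coe_injective.comp (gS.injective.comp σ.injective)
        · ext x
          simp only [Finset.mem_image, Finset.mem_univ, true_and]
          constructor
          · rintro ⟨a, rfl⟩
            exact (gS (σ a)).2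
          · intro hx
            exact ⟨σ.symm (gS.symm ⟨x, hx⟩), by simp⟩
      · intro σ1 _ σ2 _ h
        apply Equiv.ext
        intro a
        exact gS.injective (Subtype.coe_injective (congrFun h a))
      · intro f hf
        rw [Finset.mem_filter, Finset.mem_filter] at hf
        obtain ⟨⟨-, hinj⟩, himg⟩ := hf
        have hmem : ∀ a, f a ∈ S := fun a => by
          rw [← himg]; exact Finset.mem_image_of_mem f (Finset.mem_univ a)
        set ef : {j : Fin n // j ≠ i} → ↥S := fun a => ⟨f a, hmem a⟩ with hef
        have hefinj : Function.Injective ef := fun a b hab =>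
          hinj (congrArg Subtype.val hab)
        have hefbij : Function.Bijective ef :=
          (Fintype.bijective_iff_injective_and_card ef).mpr
            ⟨hefinj, by rw [hcardrows, Fintype.card_coe, hcS]⟩
        refine ⟨(Equiv.ofBijective ef hefbij).trans gS.symm, Finset.mem_univ _, ?_⟩
        funext a
        simp [Equiv.ofBijective, hef]
      · intro σ _
        rfl
    rw [hbij]
    -- evaluate the permutation sum
    have hperm : ∀ σ : Equiv.Perm {j : Fin n // j ≠ i},
        term (fun a => ↑(gS (σ a)))
        = ((∏ e ∈ S, cc e) * P.det) *
            (((Equiv.Perm.sign σ : ℤ) : MvPolynomial ε ℝ) *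
              ∏ a : {j : Fin n // j ≠ i}, P (σ a) a) := by
      intro σ
      simp only [hterm]
      have h1 : (Matrix.of fun a b : {j : Fin n // j ≠ i} => NR ↑b ↑(gS (σ a))).det
          = ((Equiv.Perm.sign σ : ℤ) : MvPolynomial ε ℝ) * P.det := by
        have : (Matrix.of fun a b : {j : Fin n // j ≠ i} => NR ↑b ↑(gS (σ a)))
            = P.submatrix σ id := rfl
        rw [this, Matrix.det_permute]
      have h2 : (∏ a : {j : Fin n // j ≠ i}, cc ↑(gS (σ a))) = ∏ e ∈ S, cc e := by
        rw [← Finset.prod_coe_sort S cc]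
        exact Equiv.prod_comp (σ.trans gS) (fun s : ↥S => cc ↑s)
      have h3 : ∀ a : {j : Fin n // j ≠ i}, P (σ a) a = NR ↑a ↑(gS (σ a)) := fun a => rfl
      rw [Finset.prod_mul_distrib, h1, h2]
      simp only [h3, smul_eq_mul]
      ring
    rw [Finset.sum_congr rfl fun σ _ => hperm σ, ← Finset.mul_sum]
    have hPdet : ∑ σ : Equiv.Perm {j : Fin n // j ≠ i},
        (((Equiv.Perm.sign σ : ℤ) : MvPolynomial ε ℝ) *
          ∏ a : {j : Fin n // j ≠ i}, P (σ a) a) = P.det := (Matrix.det_apply' P).symm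
    rw [hPdet]
    -- P.det is the constant polynomial given by the real determinant
    have hPMS : P.det = MvPolynomial.C MS.det := by
      have hmap : P = (MvPolynomial.C : ℝ →+* MvPolynomial ε ℝ).mapMatrix (MSᵀ) := rfl
      rw [hmap, ← RingHom.map_det, Matrix.det_transpose]
    have hsetEq : MTTaux.graphOf uS vS
        = SimpleGraph.fromEdgeSet {x : Sym2 (Fin n) | ∃ e ∈ S, x = s(u e, v e)} := by
      unfold MTTaux.graphOf
      congr 1
      ext x
      simp [huS, hvS]
    by_cases hc : (SimpleGraph.fromEdgeSet
        {x : Sym2 (Fin n) | ∃ e ∈ S, x = s(u e, v e)}).Connected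
    · rw [if_pos hc]
      have hconnS : (MTTaux.graphOf uS vS).Connected := by rw [hsetEq]; exact hc
      have hd1 : MS.det ^ 2 = 1 :=
        MTTaux.detsq_eq_one (n-1) uS vS hlS i gS (by rw [Fintype.card_fin]; omega) hconnS
      rw [hPMS]
      rw [show ((∏ e ∈ S, cc e) * MvPolynomial.C MS.det) * MvPolynomial.C MS.det
          = (∏ e ∈ S, cc e) * MvPolynomial.C (MS.det ^ 2) from by rw [map_pow]; ring]
      rw [hd1, MvPolynomial.C_1, mul_one]
    · rw [if_neg hc]
      have hnconnS : ¬ (MTTaux.graphOf uS vS).Connected := by rw [hsetEq]; exact hc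
      have hd0 : MS.det = 0 :=
        MTTaux.det_eq_zero_of_not_connected uS vS hlS i gS hnconnS
      rw [hPMS, hd0, map_zero, mul_zero]
  rw [Finset.sum_congr rfl hinner, ← Finset.sum_filter]
  refine Finset.sum_congr ?_ (fun T _ => rfl)
  ext T
  simp only [Finset.mem_filter, Finset.mem_powersetCard, Finset.mem_univ, true_and,
    Finset.subset_univ, and_assoc]
end

section
/- Let L be a 2×2 real symmetric positive semidefinite matrix. The L-ensemble with kernel L satisfies Pr(X_1=1, X_2=1) ≤ Pr(X_1=1)·Pr(X_2=1), i.e., L-ensembles on two variables cannot represent positive correlation. -/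
open Matrix

/-!
With `a = L₀₀`, `c = L₁₁` and `δ = det L`, one has `det (L + 1) = 1 + a + c + δ`. Clearing the
denominator `det (L + 1)`, positive since `L + 1` is positive definite, the claim becomes
`δ (1 + a + c + δ) ≤ (a + δ)(c + δ)`, i.e. `δ ≤ a c`. This is `L₀₁ L₁₀ ≥ 0`, which holds because
`L` is symmetric.
-/

theorem Matrix.det_fin_two_add_one {R : Type*} [CommRing R] (L : Matrix (Fin 2) (Fin 2) R) :
    (L + 1).det = 1 + L 0 0 + L 1 1 + L.det := by
  simp only [det_fin_two, add_apply, one_apply_eq, one_apply_ne (by decide : (0 : Fin 2) ≠ 1),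
    one_apply_ne (by decide : (1 : Fin 2) ≠ 0)]
  ring

theorem Matrix.det_mul_det_add_one_le_fin_two {R : Type*} [CommRing R] [LinearOrder R]
    [IsStrictOrderedRing R] (L : Matrix (Fin 2) (Fin 2) R) (hL : 0 ≤ L 0 1 * L 1 0) :
    L.det * (L + 1).det ≤ (L 0 0 + L.det) * (L 1 1 + L.det) := by
  have hdet_le : L.det ≤ L 0 0 * L 1 1 := by
    rw [det_fin_two]
    linarith
  rw [det_fin_two_add_one]
  linear_combination hdet_le

theorem div_le_div_mul_div_iff {K : Type*} [Field K] [LinearOrder K] [IsStrictOrderedRing K]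
    {a b c d : K} (hd : 0 < d) : a / d ≤ b / d * (c / d) ↔ a * d ≤ b * c := by
  rw [div_mul_div_comm, div_le_div_iff₀ hd (mul_pos hd hd), ← mul_assoc, mul_le_mul_iff_left₀ hd]

/-- A 2×2 L-ensemble cannot represent positive correlation:
`Pr(X_1=1, X_2=1) ≤ Pr(X_1=1)·Pr(X_2=1)`, where
`Pr(X_1=1,X_2=1) = det L / det(L+I)`, `Pr(X_1=1) = (L₁₁ + det L)/det(L+I)` and
`Pr(X_2=1) = (L₂₂ + det L)/det(L+I)`. -/
theorem lensemble_two_vars_negative_correlation (L : Matrix (Fin 2) (Fin 2) ℝ)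
    (hL : L.PosSemidef) :
    L.det / (L + 1).det
      ≤ ((L 0 0 + L.det) / (L + 1).det) * ((L 1 1 + L.det) / (L + 1).det) := by
  have hsymm : L 1 0 = L 0 1 := by simpa using hL.isHermitian.apply 0 1
  have hdet_pos : 0 < (L + 1).det := (PosDef.posSemidef_add hL PosDef.one).det_pos
  rw [div_le_div_mul_div_iff hdet_pos]
  exact L.det_mul_det_add_one_le_fin_two (by rw [hsymm]; exact mul_self_nonneg _)
end
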